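/- In the infinite-armed Bernoulli bandit model with arm means drawn i.i.d. from the uniform distribution on [0,1], consider one super-round of 1-failure m-run exploration with m = √n (n a perfect square): fresh arms are pulled in turn, each arm abandoned at its first failure, and exploration ends as soon as some arm produces m consecutive successes. For all sufficiently large n, the expected total number of pulls performed during exploration in the super-round is at most n − √n; hence over k such super-rounds the expected total number of exploration pulls is at most k·(n − √n), i.e., the exploration over k super-rounds amounts to at most k·(n − √n)/n full sequential passes of length n. -/

import Mathlib

open MeasureTheory ProbabilityTheory Filter

/-- The uniform probability measure on the real interval `[a, b]`
(Dirac measure at `a` in the degenerate case `a = b`). -/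
noncomputable def unifIcc (a b : ℝ) : Measure ℝ :=
  if a < b then (ENNReal.ofReal (b - a))⁻¹ • volume.restrict (Set.Icc a b)
  else Measure.dirac a

/-- Infinite-armed Bernoulli bandit model (canonical construction): the arm means
`means i`, `i : ℕ`, are i.i.d. random variables uniform on `[a, b]`, and, conditionally
on the means, the successive pulls of arm `i` are i.i.d. Bernoulli(`means i`) trials,
independent across arms; the pulls are realized by comparing i.i.d. uniform-`[0,1]`
seeds `seeds i t` (jointly independent of the means) with the corresponding mean. -/
structure BanditModel {Ω : Type*} [MeasurableSpace Ω] (μ : Measure Ω) (a b : ℝ) where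
  means : ℕ → Ω → ℝ
  seeds : ℕ → ℕ → Ω → ℝ
  meas_means : ∀ i, Measurable (means i)
  meas_seeds : ∀ i t, Measurable (seeds i t)
  law_means : ∀ i, μ.map (means i) = unifIcc a b
  law_seeds : ∀ i t, μ.map (seeds i t) = unifIcc 0 1
  indep : iIndepFun
      (Sum.elim means (fun it : ℕ × ℕ => seeds it.1 it.2)) μ

variable {Ω : Type*} [MeasurableSpace Ω] {μ : Measure Ω} {a b : ℝ}

/-- Outcome of the `t`-th pull of arm `i` (`true` = success, `false` = failure). -/
noncomputable def BanditModel.pull (B : BanditModel μ a b) (i t : ℕ) (ω : Ω) : Bool :=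
  decide (B.seeds i t ω ≤ B.means i ω)

/-- A strategy: an adaptive rule selecting the next arm to pull from the history of
(arm pulled, outcome observed) pairs so far. -/
abbrev Strategy := List (ℕ × Bool) → ℕ

/-- The history (chronological list of (arm, outcome) pairs) of the first `n` pulls
when playing strategy `σ` in the bandit model `B`. -/
noncomputable def BanditModel.hist (B : BanditModel μ a b) (σ : Strategy) :
    ℕ → Ω → List (ℕ × Bool)
  | 0, _ => []
  | n + 1, ω =>
      let h := B.hist σ n ω
      let i := σ h
      h ++ [(i, B.pull i (h.countP fun x => x.1 == i) ω)]

/-- Outcome of the `n`-th pull (counting from `0`) when playing strategy `σ`. -/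
noncomputable def BanditModel.outcome (B : BanditModel μ a b) (σ : Strategy)
    (n : ℕ) (ω : Ω) : Bool :=
  let h := B.hist σ n ω
  let i := σ h
  B.pull i (h.countP fun x => x.1 == i) ω

/-- `F n`: the number of failures among the first `n` pulls of strategy `σ`. -/
noncomputable def BanditModel.failures (B : BanditModel μ a b) (σ : Strategy)
    (n : ℕ) (ω : Ω) : ℕ :=
  ((Finset.range n).filter fun k => B.outcome σ k ω = false).card

/-- Total number of pulls performed during the exploration part of one super-round of
1-failure `m`-run exploration, using the fresh arms `e 0, e 1, e 2, …`: fresh arms are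
pulled in turn, each arm is abandoned at its first failure, and exploration ends as soon
as some arm produces `m` consecutive successes.  Each arm tried before the first "good"
arm contributes its pulls up to and including its first failure, and the good arm itself
contributes `m` pulls. -/
noncomputable def BanditModel.explorationPulls (B : BanditModel μ a b) (m : ℕ)
    (e : ℕ → ℕ) (ω : Ω) : ℕ :=
  let good := sInf {i | ∀ t < m, B.pull (e i) t ω = true}
  (∑ i ∈ Finset.range good, (sInf {t | B.pull (e i) t ω = false} + 1)) + m

/-!
The first `t` pulls of a fresh arm with mean `p` all succeed with probability `p ^ t`, hence,
averaging over the uniform mean, with probability `1 / (t + 1)`; in particular a fresh arm fails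
within its first `m` pulls with probability `m / (m + 1)`. An arm abandoned at its first failure
`T < m` contributes `T + 1 = #{t < m | its first t pulls succeed}` pulls, and it is reached only
if all earlier arms failed within `m` pulls. Distinct arms being independent, the expected number
of exploration pulls is at most `m + ∑ᵢ (m / (m + 1)) ^ i * ∑_{t < m} 1 / (t + 1)
≤ m + (m + 1) ^ 2 / 2`, which is at most `m ^ 2 - m = n - √n` once `m ≥ 7`.
-/

open scoped ENNReal

theorem measurable_sInf_setOf {α : Type*} [MeasurableSpace α] {A : ℕ → Set α}
    (hA : ∀ n, MeasurableSet (A n)) : Measurable fun x => sInf {n | x ∈ A n} := by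
  classical
  have hE : MeasurableSet {x | ∃ n, x ∈ A n} := by
    convert MeasurableSet.iUnion hA using 1
    ext
    simp
  have hdite : (fun x => sInf {n | x ∈ A n}) =
      fun x => if h : ∃ n, x ∈ A n then Nat.find h else 0 := by
    funext x
    split_ifs with h
    · exact Nat.sInf_def h
    · exact Nat.sInf_eq_zero.2 (.inr (by simpa [Set.eq_empty_iff_forall_notMem] using h))
  rw [hdite]
  exact Measurable.dite (measurable_find (p := fun (x : {x // ∃ n, x ∈ A n}) n => x.1 ∈ A n)
    (fun x => x.2) fun k => measurable_subtype_coe (hA k)) measurable_const hE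

theorem ProbabilityTheory.iIndepFun.curry {ι κ 𝓧 : Type*} [MeasurableSpace 𝓧]
    {X : ι → κ → Ω → 𝓧} (hX : ∀ i j, Measurable (X i j))
    (h : iIndepFun (fun p : ι × κ => X p.1 p.2) μ) :
    iIndepFun (fun i ω j => X i j ω) μ := by
  have := h.isProbabilityMeasure
  have _ i j : IsProbabilityMeasure (μ.map (X i j)) :=
    Measure.isProbabilityMeasure_map (hX i j).aemeasurable
  have hXp : Measurable fun ω (p : ι × κ) => X p.1 p.2 ω :=
    measurable_pi_lambda _ fun p => hX p.1 p.2
  rw [iIndepFun_iff_map_fun_eq_infinitePi_map (fun i => measurable_pi_lambda _ (hX i))]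
  have hcurry : (fun ω i j => X i j ω) =
      MeasurableEquiv.curry ι κ 𝓧 ∘ fun ω p => X p.1 p.2 ω := rfl
  rw [hcurry, ← Measure.map_map (MeasurableEquiv.measurable _) hXp,
    iIndepFun.map_fun_eq_infinitePi_map (X := fun p : ι × κ => X p.1 p.2)
      (fun p => hX p.1 p.2) h, Measure.infinitePi_map_curry (fun i j => μ.map (X i j))]
  congr 1
  funext i
  exact ((h.precomp (Prod.mk_right_injective i)).map_fun_eq_infinitePi_map (hX i)).symm

theorem ProbabilityTheory.iIndepFun.measure_inter_biInter {ι β : Type*} [MeasurableSpace β]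
    {f : ι → Ω → β} (h : iIndepFun f μ) {S : Finset ι} {i : ι} (hi : i ∉ S) {A : Set β}
    {C : ι → Set β} (hA : MeasurableSet A) (hC : ∀ j, MeasurableSet (C j)) :
    μ (f i ⁻¹' A ∩ ⋂ j ∈ S, f j ⁻¹' C j) =
      μ (f i ⁻¹' A) * ∏ j ∈ S, μ (f j ⁻¹' C j) := by
  classical
  set D := Function.update C i A
  have hD : ∀ j ∈ S, D j = C j := fun j hj =>
    Function.update_of_ne (ne_of_mem_of_not_mem hj hi) _ _
  have hDmeas (j : ι) : MeasurableSet (D j) := by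
    rcases eq_or_ne j i with rfl | hj
    · simpa [D] using hA
    · simpa [D, hj] using hC j
  have h' := h.meas_biInter (S := insert i S) (s := fun j => f j ⁻¹' D j)
    fun j _ => ⟨_, hDmeas j, rfl⟩
  have hDi : D i = A := Function.update_self ..
  rw [Finset.set_biInter_insert, Finset.prod_insert hi, hDi,
    Set.iInter₂_congr fun j hj => by rw [hD j hj],
    Finset.prod_congr rfl fun j hj => by rw [hD j hj]] at h'
  exact h'

theorem integrable_and_integral_le_of_lintegral_le {N : Ω → ℕ} (hN : Measurable N) {c : ℝ}
    (hc : 0 ≤ c) (h : ∫⁻ ω, (N ω : ℝ≥0∞) ∂μ ≤ ENNReal.ofReal c) :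
    Integrable (fun ω => (N ω : ℝ)) μ ∧ ∫ ω, (N ω : ℝ) ∂μ ≤ c := by
  have hmeas : AEMeasurable (fun ω => (N ω : ℝ≥0∞)) μ :=
    (measurable_from_top.comp hN).aemeasurable
  have hcast : (fun ω => (N ω : ℝ)) = fun ω => (N ω : ℝ≥0∞).toReal := by simp
  rw [hcast]
  refine ⟨integrable_toReal_of_lintegral_ne_top hmeas (h.trans_lt ENNReal.ofReal_lt_top).ne, ?_⟩
  rw [integral_toReal hmeas (ae_of_all _ fun _ => ENNReal.natCast_lt_top _)]
  exact ENNReal.toReal_le_of_le_ofReal hc h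

theorem unifIcc_zero_one : unifIcc 0 1 = volume.restrict (Set.Icc (0 : ℝ) 1) := by
  simp [unifIcc]

instance : IsProbabilityMeasure (unifIcc 0 1) :=
  ⟨by simp [unifIcc_zero_one]⟩

theorem unifIcc_zero_one_Iic {p : ℝ} (hp : p ∈ Set.Icc 0 1) :
    unifIcc 0 1 (Set.Iic p) = ENNReal.ofReal p := by
  have hIcc : Set.Iic p ∩ Set.Icc 0 1 = Set.Icc 0 p := by
    ext x
    simp only [Set.mem_inter_iff, Set.mem_Iic, Set.mem_Icc] at hp ⊢
    grind
  rw [unifIcc_zero_one, Measure.restrict_apply measurableSet_Iic, hIcc, Real.volume_Icc,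
    sub_zero]

theorem lintegral_unifIcc_ofReal_pow (t : ℕ) :
    ∫⁻ p, ENNReal.ofReal p ^ t ∂unifIcc 0 1 = ENNReal.ofReal (1 / (t + 1)) := by
  rw [unifIcc_zero_one, setLIntegral_congr_fun measurableSet_Icc
      fun p hp => (ENNReal.ofReal_pow hp.1 t).symm,
    ← ofReal_integral_eq_lintegral_ofReal (continuous_pow t).integrableOn_Icc
      ((ae_restrict_iff' measurableSet_Icc).2 (ae_of_all _ fun p hp => pow_nonneg hp.1 t)),
    integral_Icc_eq_integral_Ioc, ← intervalIntegral.integral_of_le zero_le_one, integral_pow]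
  norm_num

theorem measurableSet_forall_some_le_none (ι : Type*) [Countable ι] :
    MeasurableSet {x : Option ι → ℝ | ∀ s, x (some s) ≤ x none} := by
  simp only [Set.ofPred_forall]
  exact MeasurableSet.iInter fun s => measurableSet_le (measurable_pi_apply _)
    (measurable_pi_apply _)

theorem pi_unifIcc_forall_some_le_none (ι : Type*) [Fintype ι] :
    Measure.pi (fun _ : Option ι => unifIcc 0 1) {x | ∀ s, x (some s) ≤ x none} =
      ENNReal.ofReal (1 / (Fintype.card ι + 1)) := by
  let e := (MeasurableEquiv.piOptionEquivProd fun _ : Option ι => ℝ).symm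
  have hS := measurableSet_forall_some_le_none ι
  have hslice (p : ℝ) : (fun y => (y, p)) ⁻¹' (e ⁻¹' {x | ∀ s, x (some s) ≤ x none}) =
      Set.univ.pi fun _ => Set.Iic p := by
    ext y
    simp only [Set.mem_preimage, Set.mem_pi, Set.mem_univ, true_implies, Set.mem_Iic]
    rfl
  rw [← Measure.pi_map_piOptionEquivProd, Measure.map_apply e.measurable hS,
    Measure.prod_apply_symm (e.measurable hS)]
  simp only [hslice, Measure.pi_pi, Finset.prod_const, Finset.card_univ]
  rw [unifIcc_zero_one, setLIntegral_congr_fun measurableSet_Icc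
      fun p hp => by rw [← unifIcc_zero_one, unifIcc_zero_one_Iic hp],
    ← unifIcc_zero_one, lintegral_unifIcc_ofReal_pow]

theorem measure_forall_le_of_iIndepFun {ι : Type*} [Fintype ι] {X : Option ι → Ω → ℝ}
    (hX : ∀ k, Measurable (X k)) (hlaw : ∀ k, μ.map (X k) = unifIcc 0 1) (h : iIndepFun X μ) :
    μ {ω | ∀ s, X (some s) ω ≤ X none ω} = ENNReal.ofReal (1 / (Fintype.card ι + 1)) := by
  rw [← pi_unifIcc_forall_some_le_none, ← funext hlaw, ← h.map_fun_eq_pi_map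
      fun k => (hX k).aemeasurable,
    Measure.map_apply (measurable_pi_lambda _ hX) (measurableSet_forall_some_le_none ι)]
  rfl

theorem sum_range_one_div_succ_le (m : ℕ) :
    ∑ t ∈ Finset.range m, 1 / ((t : ℝ) + 1) ≤ ((m : ℝ) + 1) / 2 := by
  induction m with
  | zero => norm_num
  | succ n ih =>
    rw [Finset.sum_range_succ]
    rcases Nat.eq_zero_or_pos n with rfl | hn
    · norm_num
    · have hlast : 1 / ((n : ℝ) + 1) ≤ 1 / 2 := by
        gcongr
        norm_cast
        omega
      push_cast
      linarith

theorem measurableSet_forall_lt_some_le_none (t : ℕ) :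
    MeasurableSet {x : Option ℕ → ℝ | ∀ s < t, x (some s) ≤ x none} := by
  simp only [Set.ofPred_forall]
  exact MeasurableSet.iInter fun s => MeasurableSet.iInter fun _ =>
    measurableSet_le (measurable_pi_apply _) (measurable_pi_apply _)

-- Arm `i` is the family indexed by `Option ℕ`: `none` is its mean, `some t` the seed of its
-- `t`-th pull.
def armIndex (i : ℕ) (k : Option ℕ) : ℕ ⊕ ℕ × ℕ :=
  k.elim (.inl i) fun t => .inr (i, t)

theorem armIndex_injective : Function.Injective fun p : ℕ × Option ℕ => armIndex p.1 p.2 := by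
  rintro ⟨i, _ | s⟩ ⟨j, _ | t⟩ h <;> simp_all [armIndex]

namespace BanditModel

section

variable (B : BanditModel μ a b)

def arm (i : ℕ) (k : Option ℕ) : Ω → ℝ :=
  Sum.elim B.means (fun it => B.seeds it.1 it.2) (armIndex i k)

theorem measurable_arm (i : ℕ) (k : Option ℕ) : Measurable (B.arm i k) := by
  cases k
  exacts [B.meas_means i, B.meas_seeds i _]

theorem iIndepFun_arm : iIndepFun (fun i ω k => B.arm i k ω) μ :=
  iIndepFun.curry B.measurable_arm (B.indep.precomp armIndex_injective)

def succeedsFirst (i t : ℕ) : Set Ω :=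
  {ω | ∀ s < t, B.pull i s ω = true}

theorem succeedsFirst_eq_preimage (i t : ℕ) :
    B.succeedsFirst i t =
      (fun ω k => B.arm i k ω) ⁻¹' {x | ∀ s < t, x (some s) ≤ x none} := by
  ext ω
  simp [succeedsFirst, pull, arm, armIndex]

theorem measurableSet_succeedsFirst (i t : ℕ) :
    MeasurableSet (B.succeedsFirst i t) := by
  rw [succeedsFirst_eq_preimage]
  exact measurable_pi_lambda _ (B.measurable_arm i) (measurableSet_forall_lt_some_le_none t)

theorem measurable_pull (i t : ℕ) : Measurable (B.pull i t) :=
  measurable_to_bool <| by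
    have hset : B.pull i t ⁻¹' {true} = {ω | B.seeds i t ω ≤ B.means i ω} := by
      ext
      simp [pull]
    exact hset ▸ measurableSet_le (B.meas_seeds i t) (B.meas_means i)

theorem measurable_explorationPulls (m : ℕ) (e : ℕ → ℕ) :
    Measurable (B.explorationPulls m e) := by
  have hfail (i : ℕ) : Measurable fun ω => sInf {t | B.pull (e i) t ω = false} :=
    measurable_sInf_setOf fun t => measurableSet_eq_fun (B.measurable_pull (e i) t) measurable_const
  have hgood : Measurable fun ω => sInf {i | ω ∈ B.succeedsFirst (e i) m} :=
    measurable_sInf_setOf fun i => B.measurableSet_succeedsFirst (e i) m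
  have hsum : Measurable fun p : ℕ × Ω =>
      ∑ i ∈ Finset.range p.1, (sInf {t | B.pull (e i) t p.2 = false} + 1) + m := by
    refine measurable_from_prod_countable_right fun n => ?_
    exact (Finset.measurable_sum (Finset.range n) fun i _ => (hfail i).add_const 1).add_const m
  have hpair : Measurable fun ω => (sInf {i | ω ∈ B.succeedsFirst (e i) m}, ω) :=
    hgood.prodMk measurable_id
  exact (hsum.comp hpair :)

theorem succ_sInf_pull_eq_false_le {i m : ℕ} {ω : Ω} (h : ω ∉ B.succeedsFirst i m) :
    ((sInf {t | B.pull i t ω = false} + 1 : ℕ) : ℝ≥0∞) ≤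
      ∑ t ∈ Finset.range m, (B.succeedsFirst i t).indicator 1 ω := by
  set T := sInf {t | B.pull i t ω = false}
  obtain ⟨s, hsm, hs⟩ : ∃ s < m, B.pull i s ω = false := by simpa [succeedsFirst] using h
  have hTm : T < m := (Nat.sInf_le hs).trans_lt hsm
  have hrun (t : ℕ) (ht : t ≤ T) : ω ∈ B.succeedsFirst i t := fun s hs =>
    Bool.not_eq_false _ |>.mp (Nat.notMem_of_lt_sInf (hs.trans_le ht))
  calc ((T + 1 : ℕ) : ℝ≥0∞)
      = ∑ t ∈ Finset.range (T + 1), (B.succeedsFirst i t).indicator 1 ω := by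
        rw [Finset.sum_congr rfl fun t ht => Set.indicator_of_mem
          (hrun t (Nat.lt_succ_iff.mp (Finset.mem_range.mp ht))) _]
        simp
    _ ≤ _ := Finset.sum_le_sum_of_subset (Finset.range_subset_range.mpr hTm)

theorem explorationPulls_le (m : ℕ) (e : ℕ → ℕ) (ω : Ω) :
    (B.explorationPulls m e ω : ℝ≥0∞) ≤
      ∑' i, ∑ t ∈ Finset.range m, (B.succeedsFirst (e i) t ∩
        ⋂ j ∈ Finset.range i, (B.succeedsFirst (e j) m)ᶜ).indicator 1 ω + m := by
  set good := sInf {i | ω ∈ B.succeedsFirst (e i) m}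
  have hfail (j : ℕ) (hj : j < good) : ω ∉ B.succeedsFirst (e j) m := Nat.notMem_of_lt_sInf hj
  have hterm (i : ℕ) (hi : i < good) :
      ((sInf {t | B.pull (e i) t ω = false} + 1 : ℕ) : ℝ≥0∞) ≤
        ∑ t ∈ Finset.range m, (B.succeedsFirst (e i) t ∩
          ⋂ j ∈ Finset.range i, (B.succeedsFirst (e j) m)ᶜ).indicator 1 ω := by
    have hprefix : ω ∈ ⋂ j ∈ Finset.range i, (B.succeedsFirst (e j) m)ᶜ :=
      Set.mem_iInter₂.mpr fun j hj => hfail j ((Finset.mem_range.mp hj).trans hi)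
    simp only [Set.inter_indicator_one, Pi.mul_apply, Set.indicator_of_mem hprefix,
      Pi.one_apply, mul_one]
    exact B.succ_sInf_pull_eq_false_le (hfail i hi)
  calc (B.explorationPulls m e ω : ℝ≥0∞)
      = ∑ i ∈ Finset.range good,
          ((sInf {t | B.pull (e i) t ω = false} + 1 : ℕ) : ℝ≥0∞) + m := by
        simp [explorationPulls, good, succeedsFirst]
    _ ≤ _ := by
        gcongr
        exact (Finset.sum_le_sum fun i hi => hterm i (Finset.mem_range.mp hi)).trans
          (ENNReal.sum_le_tsum _)

end

variable (B : BanditModel μ 0 1)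

theorem measure_succeedsFirst (i t : ℕ) :
    μ (B.succeedsFirst i t) = ENNReal.ofReal (1 / (t + 1)) := by
  have hinj : Function.Injective fun k : Option (Fin t) => armIndex i (k.map Fin.val) :=
    armIndex_injective.comp
      ((Prod.mk_right_injective i).comp (Option.map_injective Fin.val_injective))
  have h := measure_forall_le_of_iIndepFun (fun k => B.measurable_arm i (k.map Fin.val))
    (fun k => by cases k; exacts [B.law_means i, B.law_seeds i _]) (B.indep.precomp hinj)
  rw [Fintype.card_fin] at h
  rw [← h]
  congr 1
  ext ω
  simp [succeedsFirst, pull, arm, armIndex, Fin.forall_iff]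

theorem measure_succeedsFirst_inter_iInter_compl [IsProbabilityMeasure μ]
    {e : ℕ → ℕ} (he : Function.Injective e) (m i t : ℕ) :
    μ (B.succeedsFirst (e i) t ∩ ⋂ j ∈ Finset.range i, (B.succeedsFirst (e j) m)ᶜ) =
      ENNReal.ofReal (1 / (t + 1)) * (1 - ENNReal.ofReal (1 / (m + 1))) ^ i := by
  simp only [succeedsFirst_eq_preimage, ← Set.preimage_compl]
  rw [(B.iIndepFun_arm.precomp he).measure_inter_biInter Finset.notMem_range_self
      (measurableSet_forall_lt_some_le_none t)
      fun _ => (measurableSet_forall_lt_some_le_none m).compl]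
  simp only [← succeedsFirst_eq_preimage, Set.preimage_compl, prob_compl_eq_one_sub
    (B.measurableSet_succeedsFirst _ _), measure_succeedsFirst, Finset.prod_const,
    Finset.card_range]

theorem lintegral_explorationPulls_le [IsProbabilityMeasure μ] (m : ℕ)
    {e : ℕ → ℕ} (he : Function.Injective e) :
    ∫⁻ ω, (B.explorationPulls m e ω : ℝ≥0∞) ∂μ ≤
      ENNReal.ofReal (((m : ℝ) + 1) ^ 2 / 2 + m) := by
  set q := ENNReal.ofReal (1 / (m + 1))
  have hmeas (i t : ℕ) : MeasurableSet (B.succeedsFirst (e i) t ∩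
      ⋂ j ∈ Finset.range i, (B.succeedsFirst (e j) m)ᶜ) :=
    (B.measurableSet_succeedsFirst _ _).inter
      (Finset.measurableSet_biInter _ fun j _ => (B.measurableSet_succeedsFirst _ _).compl)
  have hgeom : ∑' i, (1 - q) ^ i = ENNReal.ofReal (m + 1) := by
    rw [ENNReal.tsum_geometric, ENNReal.sub_sub_cancel ENNReal.one_ne_top
      (ENNReal.ofReal_le_one.mpr (div_le_one_of_le₀ (by linarith) (by positivity))),
      one_div, ENNReal.ofReal_inv_of_pos (by positivity), inv_inv]
  have hharm : ∑ t ∈ Finset.range m, ENNReal.ofReal (1 / (t + 1)) ≤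
      ENNReal.ofReal (((m : ℝ) + 1) / 2) := by
    rw [← ENNReal.ofReal_sum_of_nonneg fun t _ => by positivity]
    exact ENNReal.ofReal_le_ofReal (sum_range_one_div_succ_le m)
  calc ∫⁻ ω, (B.explorationPulls m e ω : ℝ≥0∞) ∂μ
      ≤ ∫⁻ ω, (∑' i, ∑ t ∈ Finset.range m, (B.succeedsFirst (e i) t ∩
          ⋂ j ∈ Finset.range i, (B.succeedsFirst (e j) m)ᶜ).indicator 1 ω + m) ∂μ :=
        lintegral_mono (B.explorationPulls_le m e)
    _ = ∑' i, ∑ t ∈ Finset.range m, ENNReal.ofReal (1 / (t + 1)) * (1 - q) ^ i + m := by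
        rw [lintegral_add_right _ measurable_const, lintegral_const, measure_univ, mul_one,
          lintegral_tsum fun i => (Finset.measurable_sum _ fun t _ =>
            measurable_one.indicator (hmeas i t)).aemeasurable]
        congr 1
        refine tsum_congr fun i => ?_
        rw [lintegral_finsetSum _ fun t _ => measurable_one.indicator (hmeas i t)]
        refine Finset.sum_congr rfl fun t _ => ?_
        rw [lintegral_indicator_one (hmeas i t), B.measure_succeedsFirst_inter_iInter_compl he]
    _ = (∑ t ∈ Finset.range m, ENNReal.ofReal (1 / (t + 1))) * ENNReal.ofReal (m + 1) + m := by
        rw [← hgeom, ← ENNReal.tsum_mul_left]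
        simp_rw [Finset.sum_mul]
    _ ≤ ENNReal.ofReal (((m : ℝ) + 1) / 2) * ENNReal.ofReal (m + 1) + ENNReal.ofReal m := by
        rw [ENNReal.ofReal_natCast]
        gcongr
    _ = ENNReal.ofReal (((m : ℝ) + 1) ^ 2 / 2 + m) := by
        rw [← ENNReal.ofReal_mul (by positivity),
          ← ENNReal.ofReal_add (by positivity) (by positivity)]
        ring_nf

end BanditModel

/-- In the infinite-armed Bernoulli bandit model with arm means drawn
i.i.d. from the uniform distribution on `[0, 1]`, consider one super-round of 1-failure
`m`-run exploration with `m = √n` (`n` a perfect square): fresh arms are pulled in turn,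
each arm abandoned at its first failure, and exploration ends as soon as some arm produces
`m` consecutive successes.  For all sufficiently large `n`, the expected total number of
pulls performed during exploration in the super-round is at most `n - √n`; hence over `k`
such super-rounds (each using its own fresh arms) the expected total number of exploration
pulls is at most `k * (n - √n)`, i.e. the exploration over `k` super-rounds amounts to at
most `k * (n - √n) / n` full sequential passes of length `n`. -/
theorem explorationPulls_expected_bound
    {Ω : Type*} [MeasurableSpace Ω] (μ : Measure Ω) [IsProbabilityMeasure μ]
    (B : BanditModel μ 0 1) :
    ∃ n₀ : ℕ, ∀ m n : ℕ, n = m ^ 2 → n₀ ≤ n →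
      ((∫ ω, (B.explorationPulls m (fun i => Nat.pair 0 i) ω : ℝ) ∂μ)
          ≤ (n : ℝ) - Real.sqrt n) ∧
      (∀ k : ℕ,
        (∫ ω, (∑ j ∈ Finset.range k,
            (B.explorationPulls m (fun i => Nat.pair j i) ω : ℝ)) ∂μ)
          ≤ (k : ℝ) * ((n : ℝ) - Real.sqrt n)) ∧
      (∀ k : ℕ,
        (∫ ω, (∑ j ∈ Finset.range k,
            (B.explorationPulls m (fun i => Nat.pair j i) ω : ℝ)) ∂μ) / n
          ≤ (k : ℝ) * ((n : ℝ) - Real.sqrt n) / n) := by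
  refine ⟨49, fun m n hn hn₀ => ?_⟩
  have hm : 7 ≤ m := by nlinarith
  have hbound : ((m : ℝ) + 1) ^ 2 / 2 + m ≤ n - Real.sqrt n := by
    have hmR : (7 : ℝ) ≤ m := by exact_mod_cast hm
    rw [hn, Nat.cast_pow, Real.sqrt_sq (Nat.cast_nonneg m)]
    nlinarith
  have hround (j : ℕ) := integrable_and_integral_le_of_lintegral_le
    (B.measurable_explorationPulls m (Nat.pair j)) (by positivity)
    (B.lintegral_explorationPulls_le m fun _ _ h => (Nat.pair_eq_pair.mp h).2)
  have hrounds (k : ℕ) : ∫ ω, (∑ j ∈ Finset.range k,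
      (B.explorationPulls m (fun i => Nat.pair j i) ω : ℝ)) ∂μ ≤ k * (n - Real.sqrt n) := by
    rw [integral_finsetSum _ fun j _ => (hround j).1]
    calc _ ≤ ∑ _j ∈ Finset.range k, (n - Real.sqrt n) :=
          Finset.sum_le_sum fun j _ => (hround j).2.trans hbound
      _ = k * (n - Real.sqrt n) := by rw [Finset.sum_const, Finset.card_range, nsmul_eq_mul]
  exact ⟨(hround 0).2.trans hbound, hrounds, fun k => div_le_div_of_nonneg_right (hrounds k)
    (Nat.cast_nonneg n)⟩
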